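/- The sequence of random vectors generated by the three-level enriched Polya urn scheme is exchangeable: the joint probability of any finite sequence of outcomes is invariant under permutations of the sequence. -/

import Mathlib

/-!
Regroup the factors of the joint probability by level: the count `c(i)` that appears in the
numerator of the first level reappears in the denominator of the second, and `c(j,i)` likewise
between the second and third. The joint probability thus becomes `∏ₜ (α(X) + t)⁻¹`, which does
not depend on the outcomes, times three products in which the `m`-th draw of a colour `b`
contributes a factor `g b m`. Such a product equals `∏_b ∏_{m < c_n(b)} g b m`, so it depends
only on the final counts, which a permutation of the draws does not change.
-/

open Finset

/-- Number of occurrences of the value `b` among the first `t` draws of `seq`. -/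
def urnCount {n : ℕ} {β : Type*} [DecidableEq β] (seq : Fin n → β) (t : ℕ) (b : β) : ℕ :=
  (Finset.univ.filter (fun h : Fin n => h.val < t ∧ seq h = b)).card

/-- Joint probability of the first `n` outcomes of the three-level enriched Polya
urn scheme: the product over draws of the sequential predictive probabilities
(product of three ratios). -/
noncomputable def enrichedPolyaJointProb (k r s n : ℕ) (α : Fin k → ℝ) (μ : Fin r → Fin k → ℝ)
    (γ : Fin s → Fin r → Fin k → ℝ) (seq : Fin n → Fin k × Fin r × Fin s) : ℝ :=
  ∏ t : Fin n,
    ((α (seq t).1 + (urnCount (fun h => (seq h).1) t.val (seq t).1 : ℝ)) / ((∑ i, α i) + t.val)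
      * ((μ (seq t).2.1 (seq t).1 +
            (urnCount (fun h => ((seq h).1, (seq h).2.1)) t.val ((seq t).1, (seq t).2.1) : ℝ))
          / ((∑ j, μ j (seq t).1) + (urnCount (fun h => (seq h).1) t.val (seq t).1 : ℝ)))
      * ((γ (seq t).2.2 (seq t).2.1 (seq t).1 + (urnCount seq t.val (seq t) : ℝ))
          / ((∑ l, γ l (seq t).2.1 (seq t).1) +
              (urnCount (fun h => ((seq h).1, (seq h).2.1)) t.val ((seq t).1, (seq t).2.1) : ℝ))))

section UrnWeight

variable {n : ℕ} {β M : Type*} [DecidableEq β]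

lemma urnCount_lt_urnCount (v : Fin n → β) {i : Fin n} {t : ℕ} (hit : i.val < t) :
    urnCount v i (v i) < urnCount v t (v i) := by
  refine card_lt_card ⟨fun h hh => ?_, fun hsub => ?_⟩
  · simp only [mem_filter, mem_univ, true_and] at hh ⊢
    exact ⟨hh.1.trans hit, hh.2⟩
  · simpa using hsub (by simp [hit] : i ∈ _)

lemma urnCount_strictMonoOn (v : Fin n → β) (b : β) :
    StrictMonoOn (fun t : Fin n => urnCount v t b) {t | v t = b} := by
  rintro i (rfl : v i = b) t - hit
  exact urnCount_lt_urnCount v hit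

lemma urnCount_eq_card_filter (v : Fin n → β) (b : β) :
    urnCount v n b = #{t | v t = b} := by
  simp [urnCount]

lemma urnCount_comp_perm (v : Fin n → β) (σ : Equiv.Perm (Fin n)) (b : β) :
    urnCount (v ∘ σ) n b = urnCount v n b := by
  simp only [urnCount_eq_card_filter]
  exact card_bij' (fun t _ => σ t) (fun t _ => σ.symm t) (by simp) (by simp) (by simp) (by simp)

variable [CommMonoid M]

def urnWeight (g : β → ℕ → M) (v : Fin n → β) : M :=
  ∏ t, g (v t) (urnCount v t (v t))

variable [Fintype β]

theorem urnWeight_eq_prod_prod_range (g : β → ℕ → M) (v : Fin n → β) :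
    urnWeight g v = ∏ b, ∏ m ∈ range (urnCount v n b), g b m := by
  rw [urnWeight, ← prod_fiberwise univ v]
  refine prod_congr rfl fun b _ => ?_
  have hfiber : ∀ t ∈ ({t | v t = b} : Finset (Fin n)),
      g (v t) (urnCount v t (v t)) = g b (urnCount v t b) := by
    intro t ht
    rw [(mem_filter.mp ht).2]
  rw [prod_congr rfl hfiber]
  have hinj : Set.InjOn (fun t : Fin n => urnCount v t b) ({t | v t = b} : Finset (Fin n)) := by
    simpa using (urnCount_strictMonoOn v b).injOn
  have hmaps : Set.MapsTo (fun t : Fin n => urnCount v t b) ({t | v t = b} : Finset (Fin n))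
      (range (urnCount v n b)) := by
    intro t ht
    simp only [coe_filter, mem_univ, true_and, Set.mem_ofPred_eq] at ht
    subst ht
    simpa using urnCount_lt_urnCount v t.isLt
  refine prod_nbij _ hmaps hinj ?_ fun _ _ => rfl
  exact surjOn_of_injOn_of_card_le _ hmaps hinj (by rw [card_range, urnCount_eq_card_filter])

theorem urnWeight_comp_perm (g : β → ℕ → M) (v : Fin n → β) (σ : Equiv.Perm (Fin n)) :
    urnWeight g (v ∘ σ) = urnWeight g v := by
  simp only [urnWeight_eq_prod_prod_range, urnCount_comp_perm]

end UrnWeight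

theorem enrichedPolyaJointProb_eq_mul_urnWeight (k r s n : ℕ) (α : Fin k → ℝ)
    (μ : Fin r → Fin k → ℝ) (γ : Fin s → Fin r → Fin k → ℝ) (w : Fin n → Fin k × Fin r × Fin s) :
    enrichedPolyaJointProb k r s n α μ γ w =
      (∏ t : Fin n, ((∑ i, α i) + t.val)⁻¹) *
        urnWeight (fun i m => (α i + m) / ((∑ j, μ j i) + m)) (Prod.fst ∘ w) *
        urnWeight (fun ji m => (μ ji.2 ji.1 + m) / ((∑ l, γ l ji.2 ji.1) + m))
          ((fun x => (x.1, x.2.1)) ∘ w) *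
        urnWeight (fun x m => γ x.2.2 x.2.1 x.1 + m) w := by
  simp only [enrichedPolyaJointProb, urnWeight, ← prod_mul_distrib]
  refine prod_congr rfl fun t _ => ?_
  simp only [Function.comp_apply, Function.comp_def]
  ring

theorem enrichedPolya_exchangeable_general
    (k r s n : ℕ) (α : Fin k → ℝ) (μ : Fin r → Fin k → ℝ) (γ : Fin s → Fin r → Fin k → ℝ)
    (seq : Fin n → Fin k × Fin r × Fin s) (σ : Equiv.Perm (Fin n)) :
    enrichedPolyaJointProb k r s n α μ γ (seq ∘ σ) =
      enrichedPolyaJointProb k r s n α μ γ seq := by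
  simp only [enrichedPolyaJointProb_eq_mul_urnWeight, ← Function.comp_assoc, urnWeight_comp_perm]

/-- The sequence generated by the three-level enriched Polya urn
scheme is exchangeable: the joint probability of any finite sequence of outcomes
is invariant under permutations of the sequence. -/
theorem enrichedPolya_exchangeable
    (k r s n : ℕ) (α : Fin k → ℝ) (μ : Fin r → Fin k → ℝ) (γ : Fin s → Fin r → Fin k → ℝ)
    (hα : ∀ i, 0 < α i) (hμ : ∀ j i, 0 < μ j i) (hγ : ∀ l j i, 0 < γ l j i)
    (seq : Fin n → Fin k × Fin r × Fin s) (σ : Equiv.Perm (Fin n)) :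
    enrichedPolyaJointProb k r s n α μ γ (seq ∘ σ) =
      enrichedPolyaJointProb k r s n α μ γ seq :=
  enrichedPolya_exchangeable_general k r s n α μ γ seq σ
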